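/- arXiv:0907.0081 — 3 statements merged into one kernel-verified Lean document; each statement's English description precedes it below -/
import Mathlib

section
/- There exists a function F : ℕ → ℕ such that whenever the parameter sequence satisfies N_k ≥ F(ℓ_{k−1}) for every k ≥ 1, then for every k ≥ 0: every word u ∈ A_k has f_0(u) > 2/3, and every word u ∈ B_k has f_0(u) < 1/3. -/
open MeasureTheory Filter Topology
open scoped ENNReal Classical

noncomputable section

/-- The configuration space `{0,1}^ℕ` (with `false = 0`, `true = 1`). -/
abbrev Conf : Type := ℕ → Bool

/-- The shift map `(Tx)(n) = x(n+1)`. -/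
def shiftMap (x : Conf) : Conf := fun n => x (n + 1)

/-- The metric `d(x,y) = 2^{-min{n : x n ≠ y n}}` for `x ≠ y`, and `d(x,x) = 0`. -/
def dist01 (x y : Conf) : ℝ :=
  if x = y then 0 else ((2 : ℝ) ^ sInf {n : ℕ | x n ≠ y n})⁻¹

/-- A subshift: a nonempty, closed, shift-invariant subset of `{0,1}^ℕ`. -/
def IsSubshift (X : Set Conf) : Prop :=
  X.Nonempty ∧ IsClosed X ∧ ∀ x ∈ X, shiftMap x ∈ X

/-- The potential `φ_X(y) = -d(y, X) = -inf {d(y,x) : x ∈ X}`. -/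
def phiX (X : Set Conf) (y : Conf) : ℝ := -sInf (dist01 y '' X)

/-- The cylinder set of points whose first `n` symbols form the word `w`. -/
def cylinder {n : ℕ} (w : Fin n → Bool) : Set Conf := {x | ∀ i : Fin n, x i = w i}

/-- The entropy `H_n(μ)` of the `n`-block marginal of `μ` (base-2 logarithm). -/
def Hblock (μ : Measure Conf) (n : ℕ) : ℝ :=
  -∑ w : Fin n → Bool, (μ (cylinder w)).toReal * Real.logb 2 (μ (cylinder w)).toReal

/-- The Kolmogorov–Sinai entropy `h(μ) = lim_n H_n(μ)/n`; since the limit exists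
(by subadditivity) for shift-invariant measures, we may define it as a `limsup`. -/
def entropy (μ : Measure Conf) : ℝ :=
  limsup (fun n : ℕ => Hblock μ n / n) atTop

/-- A shift-invariant Borel probability measure. -/
def IsInvProb (μ : Measure Conf) : Prop :=
  IsProbabilityMeasure μ ∧ μ.map shiftMap = μ

/-- An equilibrium state for `βφ`: a shift-invariant Borel probability measure maximizing
`ν ↦ β∫φ dν + h(ν)` over all shift-invariant Borel probability measures. -/
def IsEquilibriumState (φ : Conf → ℝ) (β : ℝ) (μ : Measure Conf) : Prop :=
  IsInvProb μ ∧ ∀ ν : Measure Conf, IsInvProb ν →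
    β * ∫ x, φ x ∂ν + entropy ν ≤ β * ∫ x, φ x ∂μ + entropy μ

/-- The set of all concatenations of `m` words from `S`. -/
def tupleConcat (S : Finset (List Bool)) : ℕ → Finset (List Bool)
  | 0 => {([] : List Bool)}
  | m + 1 => (S ×ˢ tupleConcat S m).image fun p => p.1 ++ p.2

/-- `A_0 = {00000, 01000}` (with `false = 0`, `true = 1`). -/
def Azero : Finset (List Bool) :=
  {[false, false, false, false, false], [false, true, false, false, false]}

/-- `B_0 = {11111, 10111}`. -/
def Bzero : Finset (List Bool) :=
  {[true, true, true, true, true], [true, false, true, true, true]}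

/-- The inductive construction: `consAB N k = (ℓ_k, A_k, B_k)`.  At step `k ≥ 1`,
`c_k` is the concatenation, in lexicographic order, of all words in
`(A_{k-1} ∪ B_{k-1})^{2^{ℓ_{k-1}}+1}`; if `k` is odd, `A_k = {c_k a^{N_k} : a ∈ A_{k-1}}`
and `B_k = {c_k b_1 ⋯ b_{N_k} : b_i ∈ B_{k-1}}`, and symmetrically if `k` is even. -/
def consAB (N : ℕ → ℕ) : ℕ → ℕ × Finset (List Bool) × Finset (List Bool)
  | 0 => (5, Azero, Bzero)
  | k + 1 =>
    let ℓ := (consAB N k).1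
    let A := (consAB N k).2.1
    let B := (consAB N k).2.2
    let c : List Bool := ((tupleConcat (A ∪ B) (2 ^ ℓ + 1)).sort (· ≤ ·)).flatten
    let n := N (k + 1)
    if k % 2 = 0 then -- `k + 1` is odd
      (c.length + n * ℓ,
        A.image fun a => c ++ (List.replicate n a).flatten,
        (tupleConcat B n).image fun w => c ++ w)
    else -- `k + 1` is even
      (c.length + n * ℓ,
        (tupleConcat A n).image fun w => c ++ w,
        B.image fun b => c ++ (List.replicate n b).flatten)

/-- The common length `ℓ_k` of the words of `A_k ∪ B_k`. -/
def ell (N : ℕ → ℕ) (k : ℕ) : ℕ := (consAB N k).1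

/-- The set of words `A_k`. -/
def Ak (N : ℕ → ℕ) (k : ℕ) : Finset (List Bool) := (consAB N k).2.1

/-- The set of words `B_k`. -/
def Bk (N : ℕ → ℕ) (k : ℕ) : Finset (List Bool) := (consAB N k).2.2

/-- `L_k = A_k ∪ B_k`. -/
def Lk (N : ℕ → ℕ) (k : ℕ) : Finset (List Bool) := Ak N k ∪ Bk N k

/-- The frequency `f_0(u)` of the symbol `0` in the word `u`. -/
def freq0 (u : List Bool) : ℝ := (u.count false : ℝ) / u.length

/-- `z` is an infinite concatenation of words from `L`. -/
def IsConcat (L : Finset (List Bool)) (z : Conf) : Prop :=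
  ∃ w : ℕ → List Bool, (∀ i, w i ∈ L ∧ w i ≠ []) ∧
    ∀ (i j : ℕ) (h : j < (w i).length),
      z ((∑ r ∈ Finset.range i, (w r).length) + j) = (w i).get ⟨j, h⟩

/-- `⟨L⟩`: the subshift of all shifts of infinite concatenations of words from `L`. -/
def langShift (L : Finset (List Bool)) : Set Conf :=
  {y | ∃ (n : ℕ) (z : Conf), IsConcat L z ∧ y = fun m => z (m + n)}

/-- The subshift `X = ⋂_{k ≥ 1} ⟨L_k⟩`. -/
def Xsub (N : ℕ → ℕ) : Set Conf := ⋂ k : ℕ, langShift (Lk N (k + 1))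

/-- The word `x|_{[i, i+ℓ)}` read off from `x ∈ {0,1}^ℕ`. -/
def windowWord (x : Conf) (i ℓ : ℕ) : List Bool := List.ofFn fun j : Fin ℓ => x (i + j)

/-!
Whatever the parity of `k`, every word of `A_{k+1}` (resp. `B_{k+1}`) is `c_{k+1}` followed by
`N_{k+1}` words of `A_k` (resp. `B_k`). The excess `#0 - 2 #1` (resp. `#1 - 2 #0`) is additive,
so by induction the tail has excess at least `N_{k+1}`, while the prefix `c_{k+1}` lowers it by at
most `2 |c_{k+1}|`. Since `|c_{k+1}|` is bounded in terms of `ℓ_k` alone, taking `F(ℓ)` above twice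
that bound keeps the excess positive, which is the claim about frequencies.
-/

section tupleConcat

variable {S : Finset (List Bool)}

lemma mem_tupleConcat_succ {m : ℕ} {u : List Bool} :
    u ∈ tupleConcat S (m + 1) ↔ ∃ a ∈ S, ∃ v ∈ tupleConcat S m, u = a ++ v := by
  simp only [tupleConcat, Finset.mem_image, Finset.mem_product, Prod.exists]
  constructor
  · rintro ⟨a, v, ⟨ha, hv⟩, rfl⟩
    exact ⟨a, ha, v, hv, rfl⟩
  · rintro ⟨a, ha, v, hv, rfl⟩
    exact ⟨a, v, ⟨ha, hv⟩, rfl⟩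

lemma flatten_replicate_mem_tupleConcat {a : List Bool} (ha : a ∈ S) (m : ℕ) :
    (List.replicate m a).flatten ∈ tupleConcat S m := by
  induction m with
  | zero => simp [tupleConcat]
  | succ m ih => exact mem_tupleConcat_succ.2 ⟨a, ha, _, ih, rfl⟩

lemma length_of_mem_tupleConcat {ℓ : ℕ} (hS : ∀ u ∈ S, u.length = ℓ) :
    ∀ {m : ℕ}, ∀ w ∈ tupleConcat S m, w.length = m * ℓ
  | 0, w, hw => by simp_all [tupleConcat]
  | m + 1, w, hw => by
    obtain ⟨a, ha, v, hv, rfl⟩ := mem_tupleConcat_succ.1 hw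
    rw [List.length_append, hS a ha, length_of_mem_tupleConcat hS v hv]
    ring

end tupleConcat

lemma card_le_of_forall_length_eq {α : Type*} [Fintype α] [Inhabited α] {S : Finset (List α)}
    {ℓ : ℕ} (hS : ∀ u ∈ S, u.length = ℓ) : S.card ≤ Fintype.card α ^ ℓ := by
  have hinj : Set.InjOn (fun u : List α => (fun i : Fin ℓ => u.getD i default)) S := by
    intro u hu v hv huv
    refine List.ext_getElem (by rw [hS u hu, hS v hv]) fun i hiu hiv => ?_
    have := congrFun huv ⟨i, (hS u hu) ▸ hiu⟩
    simpa [List.getD_eq_getElem, hiu, hiv] using this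
  simpa using Finset.card_le_card_of_injOn _ (fun _ _ => Finset.mem_univ _) hinj

lemma length_flatten_sort_le {T : Finset (List Bool)} {L : ℕ} (hT : ∀ w ∈ T, w.length = L) :
    (T.sort (· ≤ ·)).flatten.length ≤ 2 ^ L * L := by
  have hlen : (T.sort (· ≤ ·)).flatten.length = T.card * L := by
    rw [List.length_flatten, List.sum_eq_card_nsmul _ L, List.length_map, Finset.length_sort,
      smul_eq_mul]
    simp only [List.mem_map, Finset.mem_sort]
    rintro _ ⟨w, hw, rfl⟩
    exact hT w hw
  rw [hlen]
  simpa using Nat.mul_le_mul_right L (card_le_of_forall_length_eq hT)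

/-- `#b - 2 #(!b)`: additive under concatenation, and positive exactly when `b` has frequency
above `2/3` in `u`. -/
def excess (b : Bool) (u : List Bool) : ℤ := u.count b - 2 * u.count (!b)

lemma excess_append (b : Bool) (u v : List Bool) :
    excess b (u ++ v) = excess b u + excess b v := by
  simp only [excess, List.count_append]
  push_cast
  ring

lemma le_excess_of_mem_tupleConcat {S : Finset (List Bool)} {b : Bool}
    (hS : ∀ u ∈ S, 0 < excess b u) : ∀ {m : ℕ}, ∀ w ∈ tupleConcat S m, (m : ℤ) ≤ excess b w
  | 0, w, hw => by simp_all [tupleConcat, excess]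
  | m + 1, w, hw => by
    obtain ⟨a, ha, v, hv, rfl⟩ := mem_tupleConcat_succ.1 hw
    have := hS a ha
    have := le_excess_of_mem_tupleConcat hS v hv
    rw [excess_append]
    push_cast
    omega

lemma neg_two_mul_length_le_excess (b : Bool) (u : List Bool) :
    -2 * (u.length : ℤ) ≤ excess b u := by
  have := List.count_not_add_count u b
  unfold excess
  omega

lemma excess_append_pos {b : Bool} {c w : List Bool} {n : ℕ} (hn : 2 * c.length < n)
    (hw : (n : ℤ) ≤ excess b w) : 0 < excess b (c ++ w) := by
  have := neg_two_mul_length_le_excess b c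
  rw [excess_append]
  omega

lemma two_thirds_lt_freq0 {u : List Bool} (h : 0 < excess false u) : 2 / 3 < freq0 u := by
  have hlen := List.count_false_add_count_true u
  unfold excess at h
  simp only [Bool.not_false] at h
  have hpos : (0 : ℝ) < u.length := by exact_mod_cast (by omega)
  rw [freq0, div_lt_div_iff₀ (by norm_num) hpos]
  exact_mod_cast (by omega)

lemma freq0_lt_one_third {u : List Bool} (h : 0 < excess true u) : freq0 u < 1 / 3 := by
  have hlen := List.count_false_add_count_true u
  unfold excess at h
  simp only [Bool.not_true] at h
  have hpos : (0 : ℝ) < u.length := by exact_mod_cast (by omega)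
  rw [freq0, div_lt_div_iff₀ hpos (by norm_num)]
  exact_mod_cast (by omega)

section construction

variable (N : ℕ → ℕ) (k : ℕ)

/-- The word `c_{k+1}`, built from the words of level `k`. -/
def cWord : List Bool := ((tupleConcat (Lk N k) (2 ^ ell N k + 1)).sort (· ≤ ·)).flatten

lemma ell_succ : ell N (k + 1) = (cWord N k).length + N (k + 1) * ell N k := by
  unfold ell
  rw [consAB]
  split_ifs <;> rfl

variable {N k}

lemma exists_tupleConcat_of_mem_Ak_succ {u : List Bool} (hu : u ∈ Ak N (k + 1)) :
    ∃ w ∈ tupleConcat (Ak N k) (N (k + 1)), u = cWord N k ++ w := by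
  unfold Ak at hu
  rw [consAB] at hu
  split_ifs at hu
  · obtain ⟨a, ha, rfl⟩ := Finset.mem_image.1 hu
    exact ⟨_, flatten_replicate_mem_tupleConcat ha _, rfl⟩
  · obtain ⟨w, hw, rfl⟩ := Finset.mem_image.1 hu
    exact ⟨w, hw, rfl⟩

lemma exists_tupleConcat_of_mem_Bk_succ {u : List Bool} (hu : u ∈ Bk N (k + 1)) :
    ∃ w ∈ tupleConcat (Bk N k) (N (k + 1)), u = cWord N k ++ w := by
  unfold Bk at hu
  rw [consAB] at hu
  split_ifs at hu
  · obtain ⟨w, hw, rfl⟩ := Finset.mem_image.1 hu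
    exact ⟨w, hw, rfl⟩
  · obtain ⟨b, hb, rfl⟩ := Finset.mem_image.1 hu
    exact ⟨_, flatten_replicate_mem_tupleConcat hb _, rfl⟩

end construction

/-- `c_{k+1}` is the concatenation of at most `2 ^ L` words of length `L = (2 ^ ℓ_k + 1) ℓ_k`. -/
def cLengthBound (ℓ : ℕ) : ℕ := 2 ^ ((2 ^ ℓ + 1) * ℓ) * ((2 ^ ℓ + 1) * ℓ)

lemma length_cWord_le {N : ℕ → ℕ} {k : ℕ} (h : ∀ u ∈ Lk N k, u.length = ell N k) :
    (cWord N k).length ≤ cLengthBound (ell N k) :=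
  length_flatten_sort_le (length_of_mem_tupleConcat h)

theorem length_eq_ell_and_excess_pos {N : ℕ → ℕ}
    (hN : ∀ k, 2 * cLengthBound (ell N k) < N (k + 1)) (k : ℕ) :
    (∀ u ∈ Lk N k, u.length = ell N k) ∧
      (∀ u ∈ Ak N k, 0 < excess false u) ∧ (∀ u ∈ Bk N k, 0 < excess true u) := by
  induction k with
  | zero => simp only [Lk, Ak, Bk, ell, consAB]; decide
  | succ k ih =>
    obtain ⟨hlen, hA, hB⟩ := ih
    have hc : 2 * (cWord N k).length < N (k + 1) :=
      (Nat.mul_le_mul_left 2 (length_cWord_le hlen)).trans_lt (hN k)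
    have hlen_succ : ∀ S ⊆ Lk N k, ∀ w ∈ tupleConcat S (N (k + 1)),
        (cWord N k ++ w).length = ell N (k + 1) := fun S hS w hw => by
      rw [List.length_append, ell_succ,
        length_of_mem_tupleConcat (fun u hu => hlen u (hS hu)) w hw]
    refine ⟨fun u hu => ?_, fun u hu => ?_, fun u hu => ?_⟩
    · rcases Finset.mem_union.1 hu with hu | hu
      · obtain ⟨w, hw, rfl⟩ := exists_tupleConcat_of_mem_Ak_succ hu
        exact hlen_succ _ Finset.subset_union_left w hw
      · obtain ⟨w, hw, rfl⟩ := exists_tupleConcat_of_mem_Bk_succ hu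
        exact hlen_succ _ Finset.subset_union_right w hw
    · obtain ⟨w, hw, rfl⟩ := exists_tupleConcat_of_mem_Ak_succ hu
      exact excess_append_pos hc (le_excess_of_mem_tupleConcat hA w hw)
    · obtain ⟨w, hw, rfl⟩ := exists_tupleConcat_of_mem_Bk_succ hu
      exact excess_append_pos hc (le_excess_of_mem_tupleConcat hB w hw)

/-- There is `F : ℕ → ℕ` so that if `N_k ≥ F(ℓ_{k-1})` for all `k ≥ 1`,
then for every `k`, every `u ∈ A_k` has `f_0(u) > 2/3` and every `u ∈ B_k` has
`f_0(u) < 1/3`. -/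
theorem stmt2 :
    ∃ F : ℕ → ℕ, ∀ N : ℕ → ℕ, (∀ k, 0 < N k) →
      (∀ k : ℕ, F (ell N k) ≤ N (k + 1)) →
      ∀ k : ℕ, (∀ u ∈ Ak N k, 2 / 3 < freq0 u) ∧ (∀ u ∈ Bk N k, freq0 u < 1 / 3) := by
  refine ⟨fun ℓ => 2 * cLengthBound ℓ + 1, fun N _ hF k => ?_⟩
  obtain ⟨-, hA, hB⟩ := length_eq_ell_and_excess_pos hF k
  exact ⟨fun u hu => two_thirds_lt_freq0 (hA u hu), fun u hu => freq0_lt_one_third (hB u hu)⟩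

end
end

section
/- For any parameter sequence (N_k) of positive integers, the subshift X = ∩_{k≥1} ⟨L_k⟩ is minimal: X is nonempty and for every x ∈ X, the closure of the forward orbit {T^n x : n ≥ 0} equals X. -/
open MeasureTheory Filter Topology
open scoped ENNReal Classical

noncomputable section

namespace Stmt8Proof

/-! ### Basic list-window lemmas -/

def subWord (w : List Bool) (p ℓ : ℕ) : List Bool := List.ofFn fun j : Fin ℓ => w.getD (p + j) false

@[simp] lemma subWord_length (w : List Bool) (p ℓ : ℕ) : (subWord w p ℓ).length = ℓ := by
  simp [subWord]

lemma subWord_getD {j ℓ : ℕ} (w : List Bool) (p : ℕ) (hj : j < ℓ) :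
    (subWord w p ℓ).getD j false = w.getD (p + j) false := by
  rw [List.getD_eq_getElem _ _ (by simpa using hj : j < (subWord w p ℓ).length)]
  simp [subWord]

lemma eq_of_getD {u v : List Bool} (h : u.length = v.length)
    (he : ∀ j < u.length, u.getD j false = v.getD j false) : u = v := by
  apply List.ext_getElem h
  intro i h1 h2
  have := he i h1
  rwa [List.getD_eq_getElem _ _ h1, List.getD_eq_getElem _ _ h2] at this

lemma subWord_zero {w : List Bool} {ℓ : ℕ} (h : w.length = ℓ) : subWord w 0 ℓ = w := by
  apply eq_of_getD (by simp [h])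
  intro j hj
  rw [subWord_length] at hj
  rw [subWord_getD _ _ hj, Nat.zero_add]

@[simp] lemma windowWord_length (z : Conf) (a ℓ : ℕ) : (windowWord z a ℓ).length = ℓ := by
  simp [windowWord]

lemma windowWord_getD {j ℓ : ℕ} (z : Conf) (a : ℕ) (hj : j < ℓ) :
    (windowWord z a ℓ).getD j false = z (a + j) := by
  rw [List.getD_eq_getElem _ _ (by simpa using hj : j < (windowWord z a ℓ).length)]
  simp [windowWord]

lemma windowWord_sub {p ℓ ℓ' : ℕ} (z : Conf) (a : ℕ) (h : p + ℓ ≤ ℓ') :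
    windowWord z (a + p) ℓ = subWord (windowWord z a ℓ') p ℓ := by
  apply eq_of_getD (by simp)
  intro j hj
  rw [windowWord_length] at hj
  rw [windowWord_getD _ _ hj, subWord_getD _ _ hj, windowWord_getD _ _ (by omega), add_assoc]

lemma infix_subWord {u w : List Bool} (h : u <:+: w) :
    ∃ p, p + u.length ≤ w.length ∧ subWord w p u.length = u := by
  obtain ⟨s, t, rfl⟩ := h
  refine ⟨s.length, by simp, ?_⟩
  apply eq_of_getD (by simp)
  intro j hj
  rw [subWord_length] at hj
  rw [subWord_getD _ _ hj, List.append_assoc,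
    List.getD_append_right _ _ _ _ (by omega)]
  have h2 : s.length + j - s.length = j := by omega
  rw [h2, List.getD_append _ _ _ _ hj]

/-! ### Block lists -/

def IsBlockList (L : Finset (List Bool)) (ℓ : ℕ) (w : List Bool) : Prop :=
  ∃ m, w.length = m * ℓ ∧ ∀ i < m, subWord w (i * ℓ) ℓ ∈ L

lemma isBlockList_nil {L : Finset (List Bool)} {ℓ : ℕ} : IsBlockList L ℓ [] :=
  ⟨0, by simp, by omega⟩

lemma IsBlockList.append {L : Finset (List Bool)} {ℓ : ℕ} {u v : List Bool}
    (hu : IsBlockList L ℓ u) (hv : IsBlockList L ℓ v) : IsBlockList L ℓ (u ++ v) := by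
  obtain ⟨m1, h1, g1⟩ := hu
  obtain ⟨m2, h2, g2⟩ := hv
  refine ⟨m1 + m2, by simp [h1, h2, add_mul], ?_⟩
  intro i hi
  by_cases hc : i < m1
  · have he : subWord (u ++ v) (i * ℓ) ℓ = subWord u (i * ℓ) ℓ := by
      apply eq_of_getD (by simp)
      intro j hj
      rw [subWord_length] at hj
      rw [subWord_getD _ _ hj, subWord_getD _ _ hj]
      have hlt : i * ℓ + j < u.length := by
        have : (i + 1) * ℓ ≤ m1 * ℓ := Nat.mul_le_mul_right ℓ (by omega)
        have h' : (i + 1) * ℓ = i * ℓ + ℓ := by ring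
        omega
      rw [List.getD_append _ _ _ _ hlt]
    rw [he]; exact g1 i hc
  · push_neg at hc
    obtain ⟨i', rfl⟩ : ∃ i', i = m1 + i' := ⟨i - m1, by omega⟩
    have he : subWord (u ++ v) ((m1 + i') * ℓ) ℓ = subWord v (i' * ℓ) ℓ := by
      apply eq_of_getD (by simp)
      intro j hj
      rw [subWord_length] at hj
      rw [subWord_getD _ _ hj, subWord_getD _ _ hj]
      have hmul : (m1 + i') * ℓ = m1 * ℓ + i' * ℓ := by ring
      rw [List.getD_append_right _ _ _ _ (by omega)]
      congr 1
      omega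
    rw [he]; exact g2 i' (by omega)

lemma IsBlockList.of_mem {L : Finset (List Bool)} {ℓ : ℕ} {w : List Bool}
    (h : w ∈ L) (hl : w.length = ℓ) : IsBlockList L ℓ w := by
  refine ⟨1, by simp [hl], ?_⟩
  intro i hi
  have : i = 0 := by omega
  subst this
  rw [Nat.zero_mul, subWord_zero hl]
  exact h

lemma isBlockList_flatten {L : Finset (List Bool)} {ℓ : ℕ} {l : List (List Bool)}
    (h : ∀ u ∈ l, IsBlockList L ℓ u) : IsBlockList L ℓ l.flatten := by
  induction l with
  | nil => exact isBlockList_nil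
  | cons a t ih =>
    rw [List.flatten_cons]
    exact (h a (by simp)).append (ih fun u hu => h u (by simp [hu]))

/-! ### `tupleConcat` lemmas -/

lemma tupleConcat_blockList {S L : Finset (List Bool)} {ℓ : ℕ}
    (hS : ∀ s ∈ S, IsBlockList L ℓ s) :
    ∀ n, ∀ u ∈ tupleConcat S n, IsBlockList L ℓ u := by
  intro n
  induction n with
  | zero =>
    intro u hu
    simp only [tupleConcat, Finset.mem_singleton] at hu
    subst hu; exact isBlockList_nil
  | succ n ih =>
    intro u hu
    simp only [tupleConcat, Finset.mem_image, Finset.mem_product] at hu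
    obtain ⟨⟨a, b⟩, ⟨ha, hb⟩, rfl⟩ := hu
    exact (hS a ha).append (ih b hb)

lemma tupleConcat_length {S : Finset (List Bool)} {ℓ : ℕ}
    (hS : ∀ s ∈ S, s.length = ℓ) :
    ∀ n, ∀ u ∈ tupleConcat S n, u.length = n * ℓ := by
  intro n
  induction n with
  | zero =>
    intro u hu
    simp only [tupleConcat, Finset.mem_singleton] at hu
    subst hu; simp
  | succ n ih =>
    intro u hu
    simp only [tupleConcat, Finset.mem_image, Finset.mem_product] at hu
    obtain ⟨⟨a, b⟩, ⟨ha, hb⟩, rfl⟩ := hu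
    simp [hS a ha, ih b hb]
    ring

lemma tupleConcat_cons_mem {S : Finset (List Bool)} {a b : List Bool} {n : ℕ}
    (ha : a ∈ S) (hb : b ∈ tupleConcat S n) : a ++ b ∈ tupleConcat S (n + 1) := by
  simp only [tupleConcat, Finset.mem_image]
  exact ⟨(a, b), by simp [Finset.mem_product, ha, hb], rfl⟩

lemma tupleConcat_replicate_mem {S : Finset (List Bool)} {a : List Bool} (ha : a ∈ S) :
    ∀ n, (List.replicate n a).flatten ∈ tupleConcat S n := by
  intro n
  induction n with
  | zero => simp [tupleConcat]
  | succ n ih =>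
    rw [List.replicate_succ, List.flatten_cons]
    exact tupleConcat_cons_mem ha ih

lemma tupleConcat_nonempty {S : Finset (List Bool)} (hS : S.Nonempty) (n : ℕ) :
    (tupleConcat S n).Nonempty := by
  obtain ⟨a, ha⟩ := hS
  exact ⟨_, tupleConcat_replicate_mem ha n⟩

lemma tupleConcat_pair_prefix {S : Finset (List Bool)} {w1 w2 : List Bool} {n : ℕ}
    (h1 : w1 ∈ S) (h2 : w2 ∈ S) (hn : 2 ≤ n) :
    ∃ e ∈ tupleConcat S n, w1 ++ w2 <+: e := by
  obtain ⟨m, rfl⟩ : ∃ m, n = m + 2 := ⟨n - 2, by omega⟩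
  refine ⟨w1 ++ (w2 ++ (List.replicate m w2).flatten), ?_, ?_⟩
  · exact tupleConcat_cons_mem h1
      (tupleConcat_cons_mem h2 (tupleConcat_replicate_mem h2 m))
  · exact ⟨(List.replicate m w2).flatten, by simp⟩

/-! ### Block concatenations and `langShift` -/

def BC (L : Finset (List Bool)) (ℓ : ℕ) (z : Conf) : Prop :=
  ∀ i, windowWord z (i * ℓ) ℓ ∈ L

lemma isConcat_iff {L : Finset (List Bool)} {ℓ : ℕ}
    (hL : ∀ w ∈ L, w.length = ℓ) (hl : 0 < ℓ) (z : Conf) :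
    IsConcat L z ↔ BC L ℓ z := by
  constructor
  · rintro ⟨w, hw, hz⟩ i
    have hsum : (∑ r ∈ Finset.range i, (w r).length) = i * ℓ := by
      rw [Finset.sum_congr rfl (fun r _ => hL _ (hw r).1)]
      simp [mul_comm]
    have hwl : (w i).length = ℓ := hL _ (hw i).1
    have he : windowWord z (i * ℓ) ℓ = w i := by
      apply eq_of_getD (by rw [windowWord_length, hwl])
      intro j hj
      rw [windowWord_length] at hj
      have hz' := hz i j (by omega)
      rw [hsum] at hz'
      rw [windowWord_getD _ _ hj, List.getD_eq_getElem _ _ (by omega), hz',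
        List.get_eq_getElem]
    rw [he]; exact (hw i).1
  · intro h
    refine ⟨fun i => windowWord z (i * ℓ) ℓ, fun i => ⟨h i, ?_⟩, ?_⟩
    · intro hnil
      have hnil' : windowWord z (i * ℓ) ℓ = [] := hnil
      have := windowWord_length z (i * ℓ) ℓ
      rw [hnil'] at this
      simp at this
      omega
    · intro i j hj
      rw [windowWord_length] at hj
      have hsum : (∑ r ∈ Finset.range i, (windowWord z (r * ℓ) ℓ).length) = i * ℓ := by
        simp [windowWord_length, mul_comm]
      rw [hsum, List.get_eq_getElem, ← List.getD_eq_getElem _ false, windowWord_getD _ _ hj]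

lemma bc_mem_langShift {L : Finset (List Bool)} {ℓ : ℕ}
    (hL : ∀ w ∈ L, w.length = ℓ) (hl : 0 < ℓ) {z : Conf} (h : BC L ℓ z) :
    z ∈ langShift L :=
  ⟨0, z, (isConcat_iff hL hl z).mpr h, by funext m; simp⟩

lemma langShift_nonempty {L : Finset (List Bool)} {ℓ : ℕ}
    (hL : ∀ w ∈ L, w.length = ℓ) (hl : 0 < ℓ) (hne : L.Nonempty) :
    (langShift L).Nonempty := by
  obtain ⟨w, hw⟩ := hne
  have hwl : w.length = ℓ := hL w hw
  refine ⟨fun m => w.getD (m % ℓ) false, bc_mem_langShift hL hl ?_⟩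
  intro i
  have he : windowWord (fun m => w.getD (m % ℓ) false) (i * ℓ) ℓ = w := by
    apply eq_of_getD (by rw [windowWord_length, hwl])
    intro j hj
    rw [windowWord_length] at hj
    rw [windowWord_getD _ _ hj]
    have : (i * ℓ + j) % ℓ = j := by
      rw [mul_comm, Nat.mul_add_mod, Nat.mod_eq_of_lt hj]
    rw [this]
  rw [he]; exact hw

lemma langShift_shiftInv {L : Finset (List Bool)} {y : Conf} (h : y ∈ langShift L) :
    shiftMap y ∈ langShift L := by
  obtain ⟨n, z, hz, rfl⟩ := h
  refine ⟨n + 1, z, hz, ?_⟩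
  funext m
  show z (m + 1 + n) = z (m + (n + 1))
  congr 1
  omega

/-- glue a finite prefix in front of a configuration -/
def glue {r : ℕ} (u : Fin r → Bool) (y : Conf) : Conf :=
  fun m => if h : m < r then u ⟨m, h⟩ else y (m - r)

lemma glue_continuous {r : ℕ} (u : Fin r → Bool) :
    Continuous fun y : Conf => glue u y := by
  apply continuous_pi
  intro m
  by_cases h : m < r
  · simpa [glue, h] using continuous_const
  · simpa [glue, h] using continuous_apply (m - r)

lemma isClosed_bcSet (L : Finset (List Bool)) (ℓ : ℕ) :
    IsClosed {z : Conf | BC L ℓ z} := by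
  have he : {z : Conf | BC L ℓ z} =
      ⋂ i : ℕ, (fun z : Conf => (fun j : Fin ℓ => z (i * ℓ + j))) ⁻¹'
        {v : Fin ℓ → Bool | List.ofFn v ∈ L} := by
    ext z
    simp only [Set.mem_iInter, Set.mem_preimage, Set.mem_setOf_eq]
    rfl
  rw [he]
  exact isClosed_iInter fun i =>
    (isClosed_discrete _).preimage (continuous_pi fun j => continuous_apply _)

lemma langShift_eq_union {L : Finset (List Bool)} {ℓ : ℕ}
    (hL : ∀ w ∈ L, w.length = ℓ) (hl : 0 < ℓ) :
    langShift L = ⋃ r : Fin ℓ, ⋃ u : Fin (r : ℕ) → Bool,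
      {y : Conf | BC L ℓ (glue u y)} := by
  ext y
  simp only [Set.mem_iUnion, Set.mem_setOf_eq]
  constructor
  · rintro ⟨n, z, hz, rfl⟩
    have hbc : BC L ℓ z := (isConcat_iff hL hl z).mp hz
    set q := n / ℓ with hq
    set r := n % ℓ with hr
    have hrl : r < ℓ := Nat.mod_lt _ hl
    have hn : q * ℓ + r = n := by rw [mul_comm]; exact Nat.div_add_mod n ℓ
    refine ⟨⟨r, hrl⟩, fun j => z (q * ℓ + (j : ℕ)), ?_⟩
    have hg : glue (fun j : Fin r => z (q * ℓ + (j : ℕ))) (fun m => z (m + n)) =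
        fun m => z (q * ℓ + m) := by
      funext m
      by_cases h : m < r
      · simp [glue, h]
      · simp only [glue, dif_neg h]
        congr 1
        omega
    rw [hg]
    intro i
    have he : windowWord (fun m => z (q * ℓ + m)) (i * ℓ) ℓ =
        windowWord z ((q + i) * ℓ) ℓ := by
      apply eq_of_getD (by rw [windowWord_length, windowWord_length])
      intro j hj
      rw [windowWord_length] at hj
      rw [windowWord_getD _ _ hj, windowWord_getD _ _ hj]
      show z (q * ℓ + (i * ℓ + j)) = z ((q + i) * ℓ + j)
      congr 1
      ring
    rw [he]
    exact hbc (q + i)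
  · rintro ⟨r, u, hbc⟩
    refine ⟨(r : ℕ), glue u y, (isConcat_iff hL hl _).mpr hbc, ?_⟩
    funext m
    simp only [glue]
    rw [dif_neg (by omega)]
    congr 1
    omega

lemma isClosed_langShift {L : Finset (List Bool)} {ℓ : ℕ}
    (hL : ∀ w ∈ L, w.length = ℓ) (hl : 0 < ℓ) :
    IsClosed (langShift L) := by
  rw [langShift_eq_union hL hl]
  refine isClosed_iUnion_of_finite fun r => isClosed_iUnion_of_finite fun u => ?_
  exact (isClosed_bcSet L ℓ).preimage (glue_continuous u)

/-! ### Structure of the inductive construction -/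

def cw (N : ℕ → ℕ) (k : ℕ) : List Bool :=
  ((tupleConcat (Lk N k) (2 ^ ell N k + 1)).sort (· ≤ ·)).flatten

lemma consAB_succ_even (N : ℕ → ℕ) (k : ℕ) (h : k % 2 = 0) :
    consAB N (k + 1) = ((cw N k).length + N (k + 1) * ell N k,
      (Ak N k).image (fun a => cw N k ++ (List.replicate (N (k + 1)) a).flatten),
      (tupleConcat (Bk N k) (N (k + 1))).image (fun w => cw N k ++ w)) := by
  simp only [consAB, h, if_true, cw, ell, Ak, Bk, Lk]

lemma consAB_succ_odd (N : ℕ → ℕ) (k : ℕ) (h : ¬ k % 2 = 0) :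
    consAB N (k + 1) = ((cw N k).length + N (k + 1) * ell N k,
      (tupleConcat (Ak N k) (N (k + 1))).image (fun w => cw N k ++ w),
      (Bk N k).image (fun b => cw N k ++ (List.replicate (N (k + 1)) b).flatten)) := by
  simp only [consAB, h, if_false, cw, ell, Ak, Bk, Lk]

lemma ell_succ (N : ℕ → ℕ) (k : ℕ) :
    ell N (k + 1) = (cw N k).length + N (k + 1) * ell N k := by
  by_cases h : k % 2 = 0
  · rw [ell, consAB_succ_even N k h]
  · rw [ell, consAB_succ_odd N k h]

lemma flatten_replicate_length (n : ℕ) (a : List Bool) :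
    (List.replicate n a).flatten.length = n * a.length := by
  simp [List.length_flatten, List.map_replicate, List.sum_replicate, smul_eq_mul]

lemma lk_struct (N : ℕ → ℕ) (hN : ∀ k, 0 < N k) : ∀ k,
    (∀ w ∈ Lk N k, w.length = ell N k) ∧ (Ak N k).Nonempty ∧ (Bk N k).Nonempty := by
  intro k
  induction k with
  | zero =>
    refine ⟨?_, ?_, ?_⟩
    · intro w hw
      have : w ∈ Azero ∪ Bzero := hw
      fin_cases this <;> rfl
    · exact ⟨[false, false, false, false, false], by simp [Ak, consAB, Azero]⟩
    · exact ⟨[true, true, true, true, true], by simp [Bk, consAB, Bzero]⟩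
  | succ k ih =>
    obtain ⟨hlen, hA, hB⟩ := ih
    have hBlen : ∀ s ∈ Bk N k, s.length = ell N k := fun s hs =>
      hlen s (Finset.mem_union_right _ hs)
    have hAlen : ∀ s ∈ Ak N k, s.length = ell N k := fun s hs =>
      hlen s (Finset.mem_union_left _ hs)
    by_cases h : k % 2 = 0
    · refine ⟨?_, ?_, ?_⟩
      · intro w hw
        rw [Lk, Ak, Bk, consAB_succ_even N k h] at hw
        rw [ell, consAB_succ_even N k h]
        simp only [Finset.mem_union, Finset.mem_image] at hw
        rcases hw with ⟨a, ha, rfl⟩ | ⟨u, hu, rfl⟩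
        · simp [flatten_replicate_length, hlen a (Finset.mem_union_left _ ha)]
        · simp [tupleConcat_length hBlen _ u hu]
      · rw [Ak, consAB_succ_even N k h]
        exact hA.image _
      · rw [Bk, consAB_succ_even N k h]
        exact (tupleConcat_nonempty hB _).image _
    · refine ⟨?_, ?_, ?_⟩
      · intro w hw
        rw [Lk, Ak, Bk, consAB_succ_odd N k h] at hw
        rw [ell, consAB_succ_odd N k h]
        simp only [Finset.mem_union, Finset.mem_image] at hw
        rcases hw with ⟨u, hu, rfl⟩ | ⟨a, ha, rfl⟩
        · simp [tupleConcat_length hAlen _ u hu]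
        · simp [flatten_replicate_length, hlen a (Finset.mem_union_right _ ha)]
      · rw [Ak, consAB_succ_odd N k h]
        exact (tupleConcat_nonempty hA _).image _
      · rw [Bk, consAB_succ_odd N k h]
        exact hB.image _

lemma lk_nonempty (N : ℕ → ℕ) (hN : ∀ k, 0 < N k) (k : ℕ) : (Lk N k).Nonempty := by
  obtain ⟨-, ⟨a, ha⟩, -⟩ := lk_struct N hN k
  exact ⟨a, Finset.mem_union_left _ ha⟩

lemma ell_pos (N : ℕ → ℕ) (hN : ∀ k, 0 < N k) (k : ℕ) : 0 < ell N k := by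
  induction k with
  | zero => exact Nat.succ_pos _
  | succ k ih =>
    rw [ell_succ]
    have : 1 * 1 ≤ N (k + 1) * ell N k := Nat.mul_le_mul (hN (k + 1)) ih
    omega

lemma cw_length_pos (N : ℕ → ℕ) (hN : ∀ k, 0 < N k) (k : ℕ) : 0 < (cw N k).length := by
  obtain ⟨e, he⟩ := tupleConcat_nonempty (lk_nonempty N hN k) (2 ^ ell N k + 1)
  have helen : e.length = (2 ^ ell N k + 1) * ell N k :=
    tupleConcat_length (fun s hs => (lk_struct N hN k).1 s hs) _ e he
  have hmem : e ∈ (tupleConcat (Lk N k) (2 ^ ell N k + 1)).sort (· ≤ ·) :=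
    (Finset.mem_sort _).mpr he
  have hinf : e <:+: cw N k := List.infix_of_mem_flatten hmem
  have hle : e.length ≤ (cw N k).length := hinf.length_le
  have hepos : 0 < e.length := by
    rw [helen]
    have := ell_pos N hN k
    positivity
  omega

lemma ell_lt (N : ℕ → ℕ) (hN : ∀ k, 0 < N k) (k : ℕ) : ell N k < ell N (k + 1) := by
  rw [ell_succ]
  have h1 := cw_length_pos N hN k
  have h2 : 1 * ell N k ≤ N (k + 1) * ell N k := Nat.mul_le_mul_right _ (hN (k + 1))
  omega

lemma ell_ge (N : ℕ → ℕ) (hN : ∀ k, 0 < N k) (k : ℕ) : k + 5 ≤ ell N k := by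
  induction k with
  | zero => exact le_refl _
  | succ k ih => have := ell_lt N hN k; omega

lemma lk_block (N : ℕ → ℕ) (hN : ∀ k, 0 < N k) (k : ℕ) :
    ∀ w ∈ Lk N (k + 1), IsBlockList (Lk N k) (ell N k) w := by
  have hlen := (lk_struct N hN k).1
  have hS : ∀ s ∈ Lk N k, IsBlockList (Lk N k) (ell N k) s := fun s hs =>
    IsBlockList.of_mem hs (hlen s hs)
  have hcw : IsBlockList (Lk N k) (ell N k) (cw N k) := by
    apply isBlockList_flatten
    intro u hu
    exact tupleConcat_blockList hS _ u ((Finset.mem_sort _).mp hu)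
  have hApart : ∀ s ∈ Ak N k, IsBlockList (Lk N k) (ell N k) s := fun s hs =>
    hS s (Finset.mem_union_left _ hs)
  have hBpart : ∀ s ∈ Bk N k, IsBlockList (Lk N k) (ell N k) s := fun s hs =>
    hS s (Finset.mem_union_right _ hs)
  intro w hw
  by_cases h : k % 2 = 0
  · rw [Lk, Ak, Bk, consAB_succ_even N k h] at hw
    simp only [Finset.mem_union, Finset.mem_image] at hw
    rcases hw with ⟨a, ha, rfl⟩ | ⟨u, hu, rfl⟩
    · exact hcw.append (isBlockList_flatten fun v hv => by
        rw [List.eq_of_mem_replicate hv]; exact hApart a ha)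
    · exact hcw.append (tupleConcat_blockList hBpart _ u hu)
  · rw [Lk, Ak, Bk, consAB_succ_odd N k h] at hw
    simp only [Finset.mem_union, Finset.mem_image] at hw
    rcases hw with ⟨u, hu, rfl⟩ | ⟨a, ha, rfl⟩
    · exact hcw.append (tupleConcat_blockList hApart _ u hu)
    · exact hcw.append (isBlockList_flatten fun v hv => by
        rw [List.eq_of_mem_replicate hv]; exact hBpart a ha)

lemma cw_prefix (N : ℕ → ℕ) (k : ℕ) : ∀ w ∈ Lk N (k + 1), cw N k <+: w := by
  intro w hw
  by_cases h : k % 2 = 0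
  · rw [Lk, Ak, Bk, consAB_succ_even N k h] at hw
    simp only [Finset.mem_union, Finset.mem_image] at hw
    rcases hw with ⟨a, ha, rfl⟩ | ⟨u, hu, rfl⟩ <;> exact List.prefix_append _ _
  · rw [Lk, Ak, Bk, consAB_succ_odd N k h] at hw
    simp only [Finset.mem_union, Finset.mem_image] at hw
    rcases hw with ⟨u, hu, rfl⟩ | ⟨a, ha, rfl⟩ <;> exact List.prefix_append _ _

lemma pair_infix (N : ℕ → ℕ) (hN : ∀ k, 0 < N k) (k : ℕ) {w1 w2 : List Bool}
    (h1 : w1 ∈ Lk N (k + 1)) (h2 : w2 ∈ Lk N (k + 1)) {w : List Bool}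
    (hw : w ∈ Lk N (k + 2)) : w1 ++ w2 <:+: w := by
  obtain ⟨e, he, hpre⟩ := tupleConcat_pair_prefix h1 h2
    (show 2 ≤ 2 ^ ell N (k + 1) + 1 by
      have : 1 ≤ 2 ^ ell N (k + 1) := Nat.one_le_two_pow
      omega)
  have hecw : e <:+: cw N (k + 1) :=
    List.infix_of_mem_flatten ((Finset.mem_sort _).mpr he)
  exact (hpre.isInfix.trans hecw).trans (cw_prefix N (k + 1) w hw).isInfix

/-! ### Assembly -/

lemma shift_iter : ∀ (n : ℕ) (x : Conf) (m : ℕ), shiftMap^[n] x m = x (m + n)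
  | 0, x, m => rfl
  | n + 1, x, m => by
    rw [Function.iterate_succ_apply, shift_iter n (shiftMap x) m]
    rfl

lemma bc_mono (N : ℕ → ℕ) (hN : ∀ k, 0 < N k) (k : ℕ) {z : Conf}
    (h : BC (Lk N (k + 1)) (ell N (k + 1)) z) : BC (Lk N k) (ell N k) z := by
  set ℓ := ell N k with hℓ
  set ℓ' := ell N (k + 1) with hℓ'
  have hl : 0 < ℓ := ell_pos N hN k
  obtain ⟨w0, hw0⟩ := lk_nonempty N hN (k + 1)
  obtain ⟨m, hm, -⟩ := lk_block N hN k w0 hw0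
  have hw0l : w0.length = ℓ' := (lk_struct N hN (k + 1)).1 w0 hw0
  have hml : ℓ' = m * ℓ := by rw [← hw0l, hm]
  have hmpos : 0 < m := by
    by_contra h0
    push_neg at h0
    have h0' : m = 0 := by omega
    have hz : ℓ' = 0 := by rw [hml, h0', Nat.zero_mul]
    have h2 : 0 < ℓ' := ell_pos N hN (k + 1)
    omega
  intro i
  set q := i / m with hq
  set r := i % m with hr
  have hrm : r < m := Nat.mod_lt _ hmpos
  have hi : q * m + r = i := by rw [mul_comm]; exact Nat.div_add_mod i m
  have hpos : i * ℓ = q * ℓ' + r * ℓ := by rw [hml, ← hi]; ring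
  have hsub : r * ℓ + ℓ ≤ ℓ' := by
    rw [hml]
    calc r * ℓ + ℓ = (r + 1) * ℓ := by ring
    _ ≤ m * ℓ := Nat.mul_le_mul_right ℓ (by omega)
  have hwin : windowWord z (i * ℓ) ℓ = subWord (windowWord z (q * ℓ') ℓ') (r * ℓ) ℓ := by
    rw [hpos]
    exact windowWord_sub z (q * ℓ') hsub
  obtain ⟨m', hm', hb⟩ := lk_block N hN k _ (h q)
  have hm'm : m' = m := by
    have h1 : (windowWord z (q * ℓ') ℓ').length = ℓ' := windowWord_length _ _ _
    rw [hm'] at h1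
    rw [hml] at h1
    exact Nat.eq_of_mul_eq_mul_right hl h1
  rw [hwin]
  exact hb r (by omega)

lemma langShift_antitone (N : ℕ → ℕ) (hN : ∀ k, 0 < N k) :
    Antitone fun k => langShift (Lk N (k + 1)) := by
  apply antitone_nat_of_succ_le
  intro k
  rintro y ⟨n, z, hz, rfl⟩
  have h1 : ∀ w ∈ Lk N (k + 1), w.length = ell N (k + 1) := (lk_struct N hN (k + 1)).1
  have h2 : ∀ w ∈ Lk N (k + 2), w.length = ell N (k + 2) := (lk_struct N hN (k + 2)).1
  refine ⟨n, z, ?_, rfl⟩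
  rw [isConcat_iff h1 (ell_pos N hN (k + 1)) z]
  exact bc_mono N hN (k + 1) ((isConcat_iff h2 (ell_pos N hN (k + 2)) z).mp hz)

lemma approx (N : ℕ → ℕ) (hN : ∀ k, 0 < N k) {x y : Conf}
    (hx : x ∈ Xsub N) (hy : y ∈ Xsub N) (k : ℕ) :
    ∃ n : ℕ, ∀ j < ell N (k + 1), shiftMap^[n] x j = y j := by
  set ℓ := ell N (k + 1) with hℓ
  set ℓ' := ell N (k + 2) with hℓ'
  have hl : 0 < ℓ := ell_pos N hN (k + 1)
  have hl' : 0 < ℓ' := ell_pos N hN (k + 2)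
  have hlen1 : ∀ w ∈ Lk N (k + 1), w.length = ℓ := (lk_struct N hN (k + 1)).1
  have hlen2 : ∀ w ∈ Lk N (k + 2), w.length = ℓ' := (lk_struct N hN (k + 2)).1
  obtain ⟨s, z, hzc, hyz⟩ := Set.mem_iInter.mp hy k
  have hbz : BC (Lk N (k + 1)) ℓ z := (isConcat_iff hlen1 hl z).mp hzc
  obtain ⟨t, z', hz'c, hxz⟩ := Set.mem_iInter.mp hx (k + 1)
  have hbz' : BC (Lk N (k + 2)) ℓ' z' := (isConcat_iff hlen2 hl' z').mp hz'c
  set q := s / ℓ with hqdef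
  set r := s % ℓ with hrdef
  have hrl : r < ℓ := Nat.mod_lt _ hl
  have hs : q * ℓ + r = s := by rw [mul_comm]; exact Nat.div_add_mod s ℓ
  set w1 := windowWord z (q * ℓ) ℓ with hw1def
  set w2 := windowWord z ((q + 1) * ℓ) ℓ with hw2def
  have hw1 : w1 ∈ Lk N (k + 1) := hbz q
  have hw2 : w2 ∈ Lk N (k + 1) := hbz (q + 1)
  have hw12len : (w1 ++ w2).length = ℓ + ℓ := by
    rw [List.length_append, hw1def, hw2def, windowWord_length, windowWord_length]
  have hw12 : ∀ i < ℓ + ℓ, (w1 ++ w2).getD i false = z (q * ℓ + i) := by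
    intro i hi
    by_cases hc : i < ℓ
    · rw [List.getD_append _ _ _ _ (by rw [hw1def, windowWord_length]; omega),
        hw1def, windowWord_getD _ _ hc]
    · rw [List.getD_append_right _ _ _ _ (by rw [hw1def, windowWord_length]; omega)]
      rw [hw1def, windowWord_length]
      rw [hw2def, windowWord_getD _ _ (by omega : i - ℓ < ℓ)]
      have he : (q + 1) * ℓ = q * ℓ + ℓ := by ring
      congr 1
      omega
  set q' := t / ℓ' + 1 with hq'def
  have hq't : t ≤ q' * ℓ' := by
    have hd := Nat.div_add_mod t ℓ'
    have hmod : t % ℓ' < ℓ' := Nat.mod_lt _ hl'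
    have he : q' * ℓ' = ℓ' * (t / ℓ') + ℓ' := by rw [hq'def]; ring
    omega
  set w := windowWord z' (q' * ℓ') ℓ' with hwdef
  have hw : w ∈ Lk N (k + 2) := hbz' q'
  have hinf : w1 ++ w2 <:+: w := pair_infix N hN k hw1 hw2 hw
  obtain ⟨p, hp, hpeq⟩ := infix_subWord hinf
  rw [hw12len] at hp
  rw [hwdef, windowWord_length] at hp
  refine ⟨q' * ℓ' - t + p + r, ?_⟩
  intro j hj
  rw [shift_iter]
  have hxj : x (j + (q' * ℓ' - t + p + r)) = z' (j + (q' * ℓ' - t + p + r) + t) := by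
    rw [hxz]
  rw [hxj]
  have harg : j + (q' * ℓ' - t + p + r) + t = q' * ℓ' + (p + (r + j)) := by omega
  rw [harg]
  have hyj : y j = z (j + s) := by rw [hyz]
  rw [hyj]
  have hz'w : z' (q' * ℓ' + (p + (r + j))) = w.getD (p + (r + j)) false := by
    rw [hwdef, windowWord_getD _ _ (by omega : p + (r + j) < ℓ')]
  rw [hz'w]
  have hsubw : w.getD (p + (r + j)) false = (w1 ++ w2).getD (r + j) false := by
    rw [← hpeq, subWord_getD _ _ (by rw [hw12len]; omega)]
  rw [hsubw, hw12 (r + j) (by omega)]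
  congr 1
  omega

end Stmt8Proof

open Stmt8Proof in
/-- For any parameter sequence of positive integers, the subshift
`X = ⋂_{k ≥ 1} ⟨L_k⟩` is minimal: it is nonempty and the closure of every forward orbit
is all of `X`. -/
theorem stmt8 (N : ℕ → ℕ) (hN : ∀ k, 0 < N k) :
    (Xsub N).Nonempty ∧
      ∀ x ∈ Xsub N, closure (Set.range fun n : ℕ => shiftMap^[n] x) = Xsub N := by
  have hlen : ∀ k, ∀ w ∈ Lk N k, w.length = ell N k := fun k => (lk_struct N hN k).1
  have hclosed : ∀ k : ℕ, IsClosed (langShift (Lk N (k + 1))) := fun k =>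
    isClosed_langShift (hlen (k + 1)) (ell_pos N hN (k + 1))
  have hXclosed : IsClosed (Xsub N) := isClosed_iInter hclosed
  constructor
  · exact IsCompact.nonempty_iInter_of_directed_nonempty_isCompact_isClosed
      (fun k : ℕ => langShift (Lk N (k + 1)))
      (langShift_antitone N hN).directed_ge
      (fun k => langShift_nonempty (hlen (k + 1)) (ell_pos N hN (k + 1))
        (lk_nonempty N hN (k + 1)))
      (fun k => (hclosed k).isCompact)
      hclosed
  · intro x hx
    have horb : ∀ n : ℕ, shiftMap^[n] x ∈ Xsub N := by
      intro n
      induction n with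
      | zero => exact hx
      | succ n ih =>
        rw [Function.iterate_succ_apply']
        exact Set.mem_iInter.mpr fun k => langShift_shiftInv (Set.mem_iInter.mp ih k)
    apply Set.Subset.antisymm
    · exact closure_minimal (by rintro _ ⟨n, rfl⟩; exact horb n) hXclosed
    · intro y hy
      choose n hn using approx N hN hx hy
      apply mem_closure_of_tendsto (f := fun k => shiftMap^[n k] x) (b := atTop)
      · rw [tendsto_pi_nhds]
        intro j
        apply Filter.Tendsto.congr' _ tendsto_const_nhds
        filter_upwards [eventually_ge_atTop j] with k hk
        exact (hn k j (lt_of_lt_of_le (by omega) (ell_ge N hN (k + 1)))).symm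
      · exact Eventually.of_forall fun k => ⟨n k, rfl⟩

end
end

section
/- Let X ⊆ {0,1}^ℕ be a uniquely ergodic subshift, i.e., there is exactly one T-invariant Borel probability measure ν with ν(X) = 1. Then for every function assigning to each β > 0 an equilibrium state μ_β for βφ_X, we have μ_β → ν in the weak-* topology as β → +∞. -/
open MeasureTheory Filter Topology
open scoped ENNReal Classical

noncomputable section

/-!
Since `ν` is invariant, the variational principle for an equilibrium state `μ_β` gives
`β ∫ d(·, X) dμ_β ≤ h(μ_β) - h(ν) ≤ 1`: the block entropies satisfy `0 ≤ H_n ≤ n` by Jensen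
(there are `2^n` cylinders of length `n`). The Borel probability measures on the compact space
`{0,1}^ℕ` form a compact space, so it suffices to identify the weak-* cluster points of `β ↦ μ_β`.
Such a cluster point is shift-invariant (invariance is a closed condition) and integrates the
continuous function `d(·, X) ≥ 0` to `0`, hence is carried by its zero set, the closed set `X`.
By unique ergodicity it is `ν`.
-/

theorem Real.sum_negMulLog_le_log_card {ι : Type*} [Fintype ι] {p : ι → ℝ} (h0 : ∀ i, 0 ≤ p i)
    (h1 : ∑ i, p i = 1) : ∑ i, Real.negMulLog (p i) ≤ Real.log (Fintype.card ι) := by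
  set N : ℝ := (Fintype.card ι : ℝ)
  have hN : 0 < N := by
    obtain ⟨i, -⟩ := Finset.exists_ne_zero_of_sum_ne_zero (h1 ▸ one_ne_zero)
    exact Nat.cast_pos.2 (Fintype.card_pos_iff.2 ⟨i⟩)
  have hjensen := Real.concaveOn_negMulLog.le_map_sum (t := Finset.univ)
    (w := fun _ => N⁻¹) (p := fun i => N * p i) (fun _ _ => by positivity)
    (by rw [Finset.sum_const, Finset.card_univ, nsmul_eq_mul]; exact mul_inv_cancel₀ hN.ne')
    (fun i _ => Set.mem_Ici.2 (by have := h0 i; positivity))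
  have hmean : ∑ i, N⁻¹ • (N * p i) = 1 := by
    simp only [smul_eq_mul, ← mul_assoc, inv_mul_cancel₀ hN.ne', one_mul, h1]
  have hterm : ∀ i, N⁻¹ • Real.negMulLog (N * p i) = Real.negMulLog (p i) - p i * Real.log N := by
    intro i
    rw [Real.negMulLog_mul, Real.negMulLog, smul_eq_mul]
    field_simp
    ring
  rw [hmean, Real.negMulLog_one, Finset.sum_congr rfl fun i _ => hterm i, Finset.sum_sub_distrib,
    ← Finset.sum_mul, h1, one_mul, sub_nonpos] at hjensen
  exact hjensen

section PiNatMetric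

attribute [local instance] PiNat.metricSpace

theorem dist01_eq_dist (x y : Conf) : dist01 x y = dist x y := by
  by_cases h : x = y
  · simp [dist01, h]
  · rw [PiNat.dist_eq_of_ne h, PiNat.firstDiff_def, dif_pos h, dist01, if_neg h, one_div, inv_pow,
      Nat.sInf_def (s := {n | x n ≠ y n}) (Function.ne_iff.1 h)]
    congr

theorem phiX_eq_neg_infDist (X : Set Conf) (y : Conf) : phiX X y = -Metric.infDist y X := by
  simp only [phiX, Metric.infDist_eq_iInf, sInf_image', dist01_eq_dist]

-- `PiNat.metricSpace` induces the product topology definitionally.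
theorem continuous_phiX (X : Set Conf) : Continuous (phiX X) := by
  rw [funext (phiX_eq_neg_infDist X)]
  exact (Metric.continuous_infDist_pt X).neg

theorem phiX_nonpos (X : Set Conf) (y : Conf) : phiX X y ≤ 0 := by
  simpa [phiX_eq_neg_infDist] using Metric.infDist_nonneg

theorem phiX_eq_zero_iff {X : Set Conf} (hXc : IsClosed X) (hXne : X.Nonempty) {y : Conf} :
    phiX X y = 0 ↔ y ∈ X := by
  rw [phiX_eq_neg_infDist, neg_eq_zero, hXc.mem_iff_infDist_zero hXne]

end PiNatMetric

theorem continuous_shiftMap : Continuous shiftMap :=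
  continuous_pi fun n => continuous_apply (n + 1)

theorem cylinder_eq_preimage {n : ℕ} (w : Fin n → Bool) :
    _root_.cylinder w = (fun x : Conf => fun i : Fin n => x i) ⁻¹' {w} := by
  ext x
  simp [_root_.cylinder, funext_iff]

theorem sum_measureReal_cylinder (μ : Measure Conf) [IsProbabilityMeasure μ] (n : ℕ) :
    ∑ w : Fin n → Bool, μ.real (_root_.cylinder w) = 1 := by
  have hmeas : Measurable fun x : Conf => fun i : Fin n => x i :=
    measurable_pi_iff.2 fun i => measurable_pi_apply _
  simp only [cylinder_eq_preimage]
  rw [sum_measureReal_preimage_singleton _ fun w _ => hmeas (measurableSet_singleton w)]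
  simp

theorem Hblock_eq (μ : Measure Conf) (n : ℕ) :
    Hblock μ n =
      (∑ w : Fin n → Bool, Real.negMulLog (μ.real (_root_.cylinder w))) / Real.log 2 := by
  rw [Hblock, Finset.sum_div, ← Finset.sum_neg_distrib]
  refine Finset.sum_congr rfl fun w _ => ?_
  rw [Real.logb, Real.negMulLog, measureReal_def]
  ring

theorem Hblock_nonneg (μ : Measure Conf) [IsProbabilityMeasure μ] (n : ℕ) : 0 ≤ Hblock μ n := by
  rw [Hblock_eq]
  exact div_nonneg (Finset.sum_nonneg fun w _ =>
    Real.negMulLog_nonneg measureReal_nonneg measureReal_le_one) (Real.log_nonneg one_le_two)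

theorem Hblock_le (μ : Measure Conf) [IsProbabilityMeasure μ] (n : ℕ) : Hblock μ n ≤ n := by
  rw [Hblock_eq, div_le_iff₀ (Real.log_pos one_lt_two)]
  calc ∑ w : Fin n → Bool, Real.negMulLog (μ.real (_root_.cylinder w))
      ≤ Real.log (Fintype.card (Fin n → Bool)) :=
        Real.sum_negMulLog_le_log_card (fun _ => measureReal_nonneg) (sum_measureReal_cylinder μ n)
    _ = n * Real.log 2 := by simp [Real.log_pow]

theorem entropy_mem_Icc (μ : Measure Conf) [IsProbabilityMeasure μ] : entropy μ ∈ Set.Icc 0 1 := by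
  have hrate : ∀ n : ℕ, Hblock μ n / n ∈ Set.Icc (0 : ℝ) 1 := by
    intro n
    rcases n.eq_zero_or_pos with rfl | hn
    · simp
    · exact ⟨div_nonneg (Hblock_nonneg μ n) n.cast_nonneg,
        (div_le_one (by positivity)).2 (Hblock_le μ n)⟩
  have hlo : ∀ᶠ n in atTop, 0 ≤ Hblock μ n / n := Eventually.of_forall fun n => (hrate n).1
  have hhi : ∀ᶠ n in atTop, Hblock μ n / n ≤ 1 := Eventually.of_forall fun n => (hrate n).2
  exact ⟨le_limsup_of_frequently_le hlo.frequently (isBoundedUnder_of_eventually_le hhi),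
    limsup_le_of_le (isCoboundedUnder_le_of_eventually_le _ hlo) hhi⟩

theorem IsEquilibriumState.mul_integral_sub_le {φ : Conf → ℝ} {β : ℝ} {μ ν : Measure Conf}
    (hμ : IsEquilibriumState φ β μ) (hν : IsInvProb ν) :
    β * (∫ x, φ x ∂ν - ∫ x, φ x ∂μ) ≤ 1 := by
  have := hμ.1.1
  have := hν.1
  have hmax := hμ.2 ν hν
  have hμ1 := (entropy_mem_Icc μ).2
  have hν0 := (entropy_mem_Icc ν).1
  linarith [mul_sub β (∫ x, φ x ∂ν) (∫ x, φ x ∂μ)]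

namespace MeasureTheory.ProbabilityMeasure

variable {Ω : Type*} [TopologicalSpace Ω] [TopologicalSpace.MetrizableSpace Ω]
  [MeasurableSpace Ω] [BorelSpace Ω]

theorem isClosed_setOf_map_eq {T : Ω → Ω} (hT : Continuous T) :
    IsClosed {μ : ProbabilityMeasure Ω | (μ : Measure Ω).map T = μ} := by
  have hset : {μ : ProbabilityMeasure Ω | (μ : Measure Ω).map T = μ} =
      {μ | μ.map hT.measurable.aemeasurable = μ} := by
    ext μ
    simp only [Set.mem_ofPred_eq, ← toMeasure_injective.eq_iff, toMeasure_map]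
  rw [hset]
  exact isClosed_eq (continuous_map hT) continuous_id

theorem tendsto_of_unique_invariant [CompactSpace Ω] {T : Ω → Ω} (hT : Continuous T)
    {X : Set Ω} (g : C(Ω, ℝ))
    (hg_nonneg : ∀ y, 0 ≤ g y) (hg_zero : ∀ y, g y = 0 → y ∈ X) (ν : ProbabilityMeasure Ω)
    (huniq : ∀ ρ : ProbabilityMeasure Ω, (ρ : Measure Ω).map T = ρ → (ρ : Measure Ω) X = 1 → ρ = ν)
    {ι : Type*} {l : Filter ι} {m : ι → ProbabilityMeasure Ω}
    (hinv : ∀ᶠ i in l, (m i : Measure Ω).map T = m i)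
    (hg : Tendsto (fun i => ∫ y, g y ∂(m i : Measure Ω)) l (𝓝 0)) :
    Tendsto m l (𝓝 ν) := by
  refine tendsto_nhds_of_unique_mapClusterPt fun ρ hρ => huniq ρ ?_ ?_
  · exact (isClosed_setOf_map_eq hT).mem_of_mapClusterPt hρ hinv
  · have hρg : ∫ y, g y ∂(ρ : Measure Ω) = 0 :=
      eq_of_nhds_neBot ((hρ.continuousAt_comp
        (continuous_integral_continuousMap g).continuousAt).clusterPt.mono hg)
    have hg_ae : ∀ᵐ y ∂(ρ : Measure Ω), g y = 0 := by
      rw [← EventuallyEq, ← Pi.zero_def]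
      exact (integral_eq_zero_iff_of_nonneg hg_nonneg
        (g.continuous.integrable_of_hasCompactSupport (HasCompactSupport.of_compactSpace g))).1 hρg
    exact (measure_congr (eventuallyEq_univ.2 (hg_ae.mono hg_zero))).trans measure_univ

end MeasureTheory.ProbabilityMeasure

theorem integral_phiX_eq_zero {X : Set Conf} (hXc : IsClosed X) (hXne : X.Nonempty)
    {ν : Measure Conf} [IsProbabilityMeasure ν] (hνX : ν X = 1) : ∫ y, phiX X y ∂ν = 0 := by
  have hX_ae : ∀ᵐ y ∂ν, y ∈ X := mem_ae_iff.2 ((prob_compl_eq_zero_iff hXc.measurableSet).2 hνX)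
  exact integral_eq_zero_of_ae (hX_ae.mono fun y hy => (phiX_eq_zero_iff hXc hXne).2 hy)

theorem integral_neg_phiX_le {X : Set Conf} (hXc : IsClosed X) (hXne : X.Nonempty)
    {ν : Measure Conf} (hν : IsInvProb ν) (hνX : ν X = 1) {β : ℝ} (hβ : 0 < β) {μ : Measure Conf}
    (hμ : IsEquilibriumState (phiX X) β μ) : ∫ y, -phiX X y ∂μ ≤ β⁻¹ := by
  have := hν.1
  have hgap := hμ.mul_integral_sub_le hν
  rw [integral_phiX_eq_zero hXc hXne hνX, zero_sub, ← integral_neg] at hgap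
  rwa [← mul_one β⁻¹, le_inv_mul_iff₀ hβ]

/-- If `X ⊆ {0,1}^ℕ` is a uniquely ergodic subshift, with unique
shift-invariant Borel probability measure `ν` supported on `X`, then every choice of
equilibrium states `μ β` for `β φ_X` converges weak-* to `ν` as `β → +∞`. -/
theorem stmt11 (X : Set Conf) (hX : IsSubshift X)
    (ν : Measure Conf) (hν : IsInvProb ν) (hνX : ν X = 1)
    (huniq : ∀ ν' : Measure Conf, IsInvProb ν' → ν' X = 1 → ν' = ν)
    (μ : ℝ → Measure Conf)
    (hμ : ∀ β : ℝ, 0 < β → IsEquilibriumState (phiX X) β (μ β)) :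
    ∀ f : C(Conf, ℝ),
      Tendsto (fun β : ℝ => ∫ x, f x ∂(μ β)) atTop (𝓝 (∫ x, f x ∂ν)) := by
  let ν₀ : ProbabilityMeasure Conf := ⟨ν, hν.1⟩
  obtain ⟨m, hm⟩ : ∃ m : ℝ → ProbabilityMeasure Conf, ∀ β, 0 < β → (m β : Measure Conf) = μ β :=
    ⟨fun β => if h : 0 < β then ⟨μ β, (hμ β h).1.1⟩ else ν₀, fun β h => by simp [h]⟩
  let g : C(Conf, ℝ) := ⟨fun y => -phiX X y, (continuous_phiX X).neg⟩
  have hg : Tendsto (fun β => ∫ y, g y ∂(m β : Measure Conf)) atTop (𝓝 0) := by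
    refine tendsto_of_tendsto_of_tendsto_of_le_of_le' tendsto_const_nhds tendsto_inv_atTop_zero
      (Eventually.of_forall fun β => integral_nonneg fun y => neg_nonneg.2 (phiX_nonpos X y)) ?_
    filter_upwards [eventually_gt_atTop 0] with β hβ
    rw [hm β hβ]
    exact integral_neg_phiX_le hX.2.1 hX.1 hν hνX hβ (hμ β hβ)
  have hlim : Tendsto m atTop (𝓝 ν₀) := by
    refine ProbabilityMeasure.tendsto_of_unique_invariant continuous_shiftMap g
      (fun y => neg_nonneg.2 (phiX_nonpos X y))
      (fun y hy => (phiX_eq_zero_iff hX.2.1 hX.1).1 (neg_eq_zero.1 hy))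
      ν₀ (fun ρ hρ hρX => ProbabilityMeasure.toMeasure_injective (huniq ρ ⟨ρ.2, hρ⟩ hρX)) ?_ hg
    filter_upwards [eventually_gt_atTop 0] with β hβ
    rw [hm β hβ]
    exact (hμ β hβ).1.2
  intro f
  refine ((ProbabilityMeasure.tendsto_iff_forall_integral_tendsto.1 hlim)
    (BoundedContinuousFunction.mkOfCompact f)).congr' ?_
  filter_upwards [eventually_gt_atTop 0] with β hβ
  simp [hm β hβ]

end
end
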